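/- arXiv:math/9905031 — 3 statements merged into one kernel-verified Lean document; each statement's English description precedes it below -/
import Mathlib

section
/- Let G = (L, B) be a finite graph, let β ≥ 0, let q ≥ 2 be an integer, let i ∈ {1,…,q}, and let x, y ∈ L. If X is distributed according to the Potts Gibbs measure μ^G_{β,q}, then μ^G_{β,q}(X(x)=i) = 1/q, and the events {X(x)=i} and {X(y)=i} are positively correlated: μ^G_{β,q}(X(x)=i and X(y)=i) ≥ μ^G_{β,q}(X(x)=i)·μ^G_{β,q}(X(y)=i) = 1/q². -/
open Finset

noncomputable section

variable {V : Type*}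

/-- The spanning subgraph of `G` consisting of the `η`-open edges. -/
def openSub (G : SimpleGraph V) (η : G.edgeSet → Bool) : SimpleGraph V :=
  SimpleGraph.fromEdgeSet {s : Sym2 V | ∃ h : s ∈ G.edgeSet, η ⟨s, h⟩ = true}

/-- The number of open clusters of `η` (connected components of the spanning
subgraph of open edges, including isolated vertices). -/
def numClusters (G : SimpleGraph V) (η : G.edgeSet → Bool) : ℕ :=
  Nat.card (openSub G η).ConnectedComponent

/-- The factor `p^b (1-p)^(1-b)`. -/
def bWeight (p : ℝ) (b : Bool) : ℝ := if b then p else 1 - p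

variable [Fintype V] [DecidableEq V]

/-- Unnormalized random-cluster weight. -/
def rcWeight (G : SimpleGraph V) [Fintype G.edgeSet] (p q : ℝ) (η : G.edgeSet → Bool) : ℝ :=
  (∏ e : G.edgeSet, bWeight p (η e)) * q ^ numClusters G η

/-- The random-cluster measure `φ^G_{p,q}`. -/
def rcMeasure (G : SimpleGraph V) [Fintype G.edgeSet] (p q : ℝ) (η : G.edgeSet → Bool) : ℝ :=
  rcWeight G p q η / ∑ η' : G.edgeSet → Bool, rcWeight G p q η'

/-- Whether the spin configuration `σ` disagrees across an unordered pair. -/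
def disagreeB {k : ℕ} (σ : V → Fin k) : Sym2 V → Bool :=
  Sym2.lift ⟨fun x y => decide (σ x ≠ σ y), fun x y => by simp [ne_comm]⟩

/-- Unnormalized Potts weight `exp(-2β · #{disagreeing edges})`. -/
def pottsWeight (G : SimpleGraph V) [Fintype G.edgeSet] (β : ℝ) {k : ℕ} (σ : V → Fin k) : ℝ :=
  Real.exp (-2 * β * ∑ e : G.edgeSet, (if disagreeB σ e.val then (1 : ℝ) else 0))

/-- The `k`-state Potts Gibbs measure `μ^G_{β,k}`. -/
def pottsMeasure (G : SimpleGraph V) [Fintype G.edgeSet] (β : ℝ) {k : ℕ} (σ : V → Fin k) : ℝ :=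
  pottsWeight G β σ / ∑ σ' : V → Fin k, pottsWeight G β σ'

/-- Unnormalized Edwards–Sokal weight. -/
def esWeight (G : SimpleGraph V) [Fintype G.edgeSet] (p : ℝ) {k : ℕ}
    (σ : V → Fin k) (η : G.edgeSet → Bool) : ℝ :=
  ∏ e : G.edgeSet,
    bWeight p (η e) * (if η e = true ∧ disagreeB σ e.val = true then 0 else 1)

/-- The Edwards–Sokal measure `P^G_{p,k}`. -/
def esMeasure (G : SimpleGraph V) [Fintype G.edgeSet] (p : ℝ) {k : ℕ}
    (σ : V → Fin k) (η : G.edgeSet → Bool) : ℝ :=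
  esWeight G p σ η /
    ∑ ση : (V → Fin k) × (G.edgeSet → Bool), esWeight G p ση.1 ση.2

/-- `σ` is constant on every open cluster of `η`. -/
def ConstOnClusters (G : SimpleGraph V) (η : G.edgeSet → Bool) {k : ℕ} (σ : V → Fin k) : Prop :=
  ∀ x y : V, (openSub G η).Reachable x y → σ x = σ y

/-!
Permuting the colours preserves the Potts weight, so `σ x` is uniform on `Fin q`.
For the correlation, write `r = exp (-2β) ∈ [0, 1]` and expand each edge factor as
`exp (-2β · 1{σ u ≠ σ v}) = r + (1 - r) · 1{σ u = σ v}`: the Potts weight becomes a sum over bond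
configurations `η` of Edwards–Sokal weights, each a nonnegative number times the indicator that
`σ` is constant on the open clusters of `η`. For fixed `η`, recolouring the cluster of `y` with `i`
injects the colourings with `σ x = i, σ y = j` into those with `σ x = i, σ y = i`. Hence
`μ(σ x = i, σ y = j) ≤ μ(σ x = i, σ y = i)` for every `j`, and summing over `j` gives
`1 / q = μ(σ x = i) ≤ q · μ(σ x = i, σ y = i)`.
-/

section Clusters

variable {V : Type*} {G : SimpleGraph V} {k : ℕ}

lemma bWeight_nonneg {p : ℝ} (hp₀ : 0 ≤ p) (hp₁ : p ≤ 1) (b : Bool) : 0 ≤ bWeight p b := by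
  cases b <;> simp [bWeight] <;> linarith

lemma pottsWeight_comp_of_injective [Fintype G.edgeSet] (β : ℝ) {π : Fin k → Fin k}
    (hπ : Function.Injective π) (σ : V → Fin k) : pottsWeight G β (π ∘ σ) = pottsWeight G β σ := by
  unfold pottsWeight
  congr 3 with e
  induction (e : Sym2 V) using Sym2.ind with
  | _ u v => simp [disagreeB, hπ.eq_iff]

lemma constOnClusters_iff (η : G.edgeSet → Bool) (σ : V → Fin k) :
    ConstOnClusters G η σ ↔ ∀ e, η e = true → disagreeB σ e = false := by
  constructor
  · rintro hσ ⟨e, he⟩ hη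
    induction e using Sym2.ind with
    | _ u v =>
      have hadj : (openSub G η).Adj u v := ⟨⟨he, hη⟩, (G.mem_edgeSet.mp he).ne⟩
      simpa [disagreeB] using hσ u v hadj.reachable
  · rintro h u v ⟨w⟩
    induction w with
    | nil => rfl
    | @cons u v w hadj _ ih =>
      obtain ⟨⟨he, hη⟩, -⟩ := hadj
      have huv : σ u = σ v := by simpa [disagreeB] using h _ hη
      exact huv.trans ih

open Classical in
lemma esWeight_eq_ite [Fintype G.edgeSet] (p : ℝ) (σ : V → Fin k) (η : G.edgeSet → Bool) :
    esWeight G p σ η = if ConstOnClusters G η σ then ∏ e, bWeight p (η e) else 0 := by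
  rw [constOnClusters_iff]
  split_ifs with h
  · refine prod_congr rfl fun e _ => ?_
    rw [if_neg fun hd => by simp [h e hd.1] at hd, mul_one]
  · push Not at h
    obtain ⟨e, hη, hd⟩ := h
    exact prod_eq_zero (mem_univ e) (by simp [hη, hd])

lemma pottsWeight_eq_sum_esWeight [DecidableEq V] [Fintype G.edgeSet] (β : ℝ) (σ : V → Fin k) :
    pottsWeight G β σ = ∑ η : G.edgeSet → Bool, esWeight G (1 - Real.exp (-2 * β)) σ η := by
  calc pottsWeight G β σ
      = ∏ e : G.edgeSet, ∑ b : Bool, bWeight (1 - Real.exp (-2 * β)) b *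
          (if b = true ∧ disagreeB σ e = true then 0 else 1) := by
        rw [pottsWeight, mul_sum, Real.exp_sum]
        refine prod_congr rfl fun e _ => ?_
        cases disagreeB σ e <;> simp [bWeight]
    _ = _ := Fintype.prod_sum _

open Classical in
def recolourCluster (H : SimpleGraph V) (y : V) (i : Fin k) (σ : V → Fin k) : V → Fin k :=
  fun v => if H.Reachable y v then i else σ v

lemma constOnClusters_recolourCluster {η : G.edgeSet → Bool} {σ : V → Fin k}
    (hσ : ConstOnClusters G η σ) (y : V) (i : Fin k) :
    ConstOnClusters G η (recolourCluster (openSub G η) y i σ) := by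
  intro u v huv
  by_cases hu : (openSub G η).Reachable y u
  · simp [recolourCluster, hu, hu.trans huv]
  · have hv : ¬ (openSub G η).Reachable y v := fun hv => hu (hv.trans huv.symm)
    simp [recolourCluster, hu, hv, hσ u v huv]

lemma recolourCluster_injOn (η : G.edgeSet → Bool) (y : V) (i j : Fin k) :
    Set.InjOn (recolourCluster (openSub G η) y i) {σ | σ y = j ∧ ConstOnClusters G η σ} := by
  rintro σ ⟨hσy, hσ⟩ τ ⟨hτy, hτ⟩ h
  funext v
  by_cases hv : (openSub G η).Reachable y v
  · rw [← hσ y v hv, ← hτ y v hv, hσy, hτy]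
  · simpa [recolourCluster, hv] using congrFun h v

end Clusters

section Colourings

variable {G : SimpleGraph V} [Fintype G.edgeSet] {k : ℕ}

lemma sum_pottsWeight_apply_eq (β : ℝ) (x : V) (i j : Fin k) :
    ∑ σ with σ x = i, pottsWeight G β σ = ∑ σ with σ x = j, pottsWeight G β σ := by
  let τ := Equiv.swap i j
  refine sum_nbij' (τ ∘ ·) (τ ∘ ·) ?_ ?_ ?_ ?_
    fun σ _ => (pottsWeight_comp_of_injective β τ.injective σ).symm
  all_goals
    intro σ _
    simp_all [τ, Function.comp_def]

lemma sum_pottsWeight_eq_mul (β : ℝ) (x : V) (i : Fin k) :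
    ∑ σ : V → Fin k, pottsWeight G β σ = k * ∑ σ with σ x = i, pottsWeight G β σ := by
  rw [← sum_fiberwise univ (fun σ : V → Fin k => σ x),
    sum_congr rfl fun j _ => sum_pottsWeight_apply_eq β x j i]
  simp

lemma sum_pottsWeight_pos (β : ℝ) [NeZero k] : 0 < ∑ σ : V → Fin k, pottsWeight G β σ :=
  sum_pos (fun _ _ => Real.exp_pos _) univ_nonempty

lemma sum_pottsMeasure_eq_div (β : ℝ) (s : Finset (V → Fin k)) :
    ∑ σ ∈ s, pottsMeasure G β σ =
      (∑ σ ∈ s, pottsWeight G β σ) / ∑ σ : V → Fin k, pottsWeight G β σ :=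
  (sum_div ..).symm

lemma sum_pottsMeasure_apply (β : ℝ) (x : V) (i : Fin k) :
    ∑ σ with σ x = i, pottsMeasure G β σ = 1 / k := by
  have : NeZero k := NeZero.of_pos i.pos
  have hZ := sum_pottsWeight_pos (G := G) β (k := k)
  rw [sum_pottsWeight_eq_mul β x i] at hZ
  rw [sum_pottsMeasure_eq_div, sum_pottsWeight_eq_mul β x i]
  have hS : 0 < ∑ σ with σ x = i, pottsWeight G β σ := pos_of_mul_pos_right hZ (by positivity)
  field_simp

lemma sum_esWeight_pair_le {p : ℝ} (hp₀ : 0 ≤ p) (hp₁ : p ≤ 1) (η : G.edgeSet → Bool)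
    (x y : V) (i j : Fin k) :
    ∑ σ with σ x = i ∧ σ y = j, esWeight G p σ η ≤
      ∑ σ with σ x = i ∧ σ y = i, esWeight G p σ η := by
  classical
  simp only [esWeight_eq_ite, sum_ite, sum_const_zero, add_zero, sum_const, nsmul_eq_mul,
    filter_filter]
  refine mul_le_mul_of_nonneg_right ?_ (prod_nonneg fun e _ => bWeight_nonneg hp₀ hp₁ _)
  refine Nat.cast_le.mpr (card_le_card_of_injOn (recolourCluster (openSub G η) y i) ?_ ?_)
  · intro σ hσ
    simp only [coe_filter, mem_univ, true_and, Set.mem_ofPred_eq] at hσ ⊢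
    obtain ⟨⟨hx, -⟩, hconst⟩ := hσ
    refine ⟨⟨?_, by simp [recolourCluster]⟩, constOnClusters_recolourCluster hconst y i⟩
    by_cases h : (openSub G η).Reachable y x <;> simp [recolourCluster, h, hx]
  · intro σ hσ τ hτ
    simp only [coe_filter, mem_univ, true_and, Set.mem_ofPred_eq] at hσ hτ
    exact recolourCluster_injOn η y i j ⟨hσ.1.2, hσ.2⟩ ⟨hτ.1.2, hτ.2⟩

lemma sum_pottsWeight_pair_le {β : ℝ} (hβ : 0 ≤ β) (x y : V) (i j : Fin k) :
    ∑ σ with σ x = i ∧ σ y = j, pottsWeight G β σ ≤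
      ∑ σ with σ x = i ∧ σ y = i, pottsWeight G β σ := by
  have hp₀ : 0 ≤ 1 - Real.exp (-2 * β) := by
    rw [sub_nonneg, Real.exp_le_one_iff]
    linarith
  have hp₁ : 1 - Real.exp (-2 * β) ≤ 1 := by linarith [Real.exp_pos (-2 * β)]
  simp only [pottsWeight_eq_sum_esWeight]
  rw [sum_comm, sum_comm (s := {σ : V → Fin k | σ x = i ∧ σ y = i})]
  exact sum_le_sum fun η _ => sum_esWeight_pair_le hp₀ hp₁ η x y i j

lemma sum_pottsWeight_apply_le {β : ℝ} (hβ : 0 ≤ β) (x y : V) (i : Fin k) :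
    ∑ σ with σ x = i, pottsWeight G β σ ≤ k * ∑ σ with σ x = i ∧ σ y = i, pottsWeight G β σ :=
  calc ∑ σ with σ x = i, pottsWeight G β σ
      = ∑ j, ∑ σ with σ x = i ∧ σ y = j, pottsWeight G β σ := by
        rw [← sum_fiberwise _ (fun σ : V → Fin k => σ y)]
        simp only [filter_filter]
    _ ≤ ∑ _j : Fin k, ∑ σ with σ x = i ∧ σ y = i, pottsWeight G β σ :=
        sum_le_sum fun j _ => sum_pottsWeight_pair_le hβ x y i j
    _ = k * ∑ σ with σ x = i ∧ σ y = i, pottsWeight G β σ := by simp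

end Colourings

theorem potts_positive_correlation_general (G : SimpleGraph V) [Fintype G.edgeSet]
    (β : ℝ) (hβ : 0 ≤ β) (q : ℕ) (i : Fin q) (x y : V) :
    (∑ σ ∈ univ.filter (fun σ : V → Fin q => σ x = i), pottsMeasure G β σ) = 1 / q ∧
    (∑ σ ∈ univ.filter (fun σ : V → Fin q => σ y = i), pottsMeasure G β σ) = 1 / q ∧
    (∑ σ ∈ univ.filter (fun σ : V → Fin q => σ x = i ∧ σ y = i), pottsMeasure G β σ) ≥
      (∑ σ ∈ univ.filter (fun σ : V → Fin q => σ x = i), pottsMeasure G β σ) *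
        (∑ σ ∈ univ.filter (fun σ : V → Fin q => σ y = i), pottsMeasure G β σ) := by
  have hx := sum_pottsMeasure_apply (G := G) β x i
  have hy := sum_pottsMeasure_apply (G := G) β y i
  refine ⟨hx, hy, ?_⟩
  have : NeZero q := NeZero.of_pos i.pos
  have hq : (0 : ℝ) < q := by exact_mod_cast i.pos
  rw [hx, hy, ge_iff_le, sum_pottsMeasure_eq_div, le_div_iff₀ (sum_pottsWeight_pos β),
    sum_pottsWeight_eq_mul β x i]
  calc 1 / (q : ℝ) * (1 / q) * (q * ∑ σ with σ x = i, pottsWeight G β σ)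
      = (∑ σ with σ x = i, pottsWeight G β σ) / q := by field_simp
    _ ≤ ∑ σ with σ x = i ∧ σ y = i, pottsWeight G β σ :=
        (div_le_iff₀' hq).mpr (sum_pottsWeight_apply_le hβ x y i)

/-- In the Potts model, single-site marginals equal `1/q`, and
the events `{X(x)=i}` and `{X(y)=i}` are positively correlated. -/
theorem potts_positive_correlation (G : SimpleGraph V) [Fintype G.edgeSet]
    (β : ℝ) (hβ : 0 ≤ β) (q : ℕ) (hq : 2 ≤ q) (i : Fin q) (x y : V) :
    (∑ σ ∈ univ.filter (fun σ : V → Fin q => σ x = i), pottsMeasure G β σ) = 1 / q ∧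
    (∑ σ ∈ univ.filter (fun σ : V → Fin q => σ y = i), pottsMeasure G β σ) = 1 / q ∧
    (∑ σ ∈ univ.filter (fun σ : V → Fin q => σ x = i ∧ σ y = i), pottsMeasure G β σ) ≥
      (∑ σ ∈ univ.filter (fun σ : V → Fin q => σ x = i), pottsMeasure G β σ) *
        (∑ σ ∈ univ.filter (fun σ : V → Fin q => σ y = i), pottsMeasure G β σ) :=
  potts_positive_correlation_general G β hβ q i x y
end
end

section
/- Let G = (L, B) be a finite graph, let λ > 0, and let p = λ/(1+λ). For ξ ∈ {−1,0,+1}^L write |ξ| ∈ {0,1}^L for the configuration |ξ|(x) = |ξ(x)|. Then for every ξ ∈ {−1,0,+1}^L: μ^G_λ(ξ) = 1{ξ(x)ξ(y) ≠ −1 for every edge ⟨xy⟩ ∈ B}·ψ^G_{p,2}(|ξ|)·2^{−k(|ξ|)}; in particular, picking a site configuration according to ψ^G_{p,2} and assigning an independent uniform sign from {−1,+1} to each open cluster (and 0 to closed vertices) produces a configuration distributed as the Widom–Rowlinson Gibbs measure μ^G_λ. -/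
open Finset

noncomputable section

open scoped Classical

variable {V : Type*}

/-- The number of open clusters of a site configuration `η`: the number of
connected components of the subgraph of `G` induced by the open vertices. -/
def siteClusters (G : SimpleGraph V) (η : V → Bool) : ℕ :=
  Nat.card (G.induce {x | η x = true}).ConnectedComponent

variable [Fintype V] [DecidableEq V]

/-- Unnormalized site-random-cluster weight. -/
def siteRCWeight (G : SimpleGraph V) (p q : ℝ) (η : V → Bool) : ℝ :=
  (∏ x : V, bWeight p (η x)) * q ^ siteClusters G η

/-- The site-random-cluster measure `ψ^G_{p,q}`. -/
def siteRCMeasure (G : SimpleGraph V) (p q : ℝ) (η : V → Bool) : ℝ :=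
  siteRCWeight G p q η / ∑ η' : V → Bool, siteRCWeight G p q η'

/-- Unnormalized Widom–Rowlinson weight with activity `lam`. -/
def wrWeight (G : SimpleGraph V) (lam : ℝ) (ξ : V → SignType) : ℝ :=
  (if ∀ x y : V, G.Adj x y → ξ x * ξ y ≠ -1 then 1 else 0) *
    ∏ x : V, lam ^ (if ξ x = 0 then 0 else 1)

/-- The Widom–Rowlinson Gibbs measure `μ^G_lam`. -/
def wrMeasure (G : SimpleGraph V) (lam : ℝ) (ξ : V → SignType) : ℝ :=
  wrWeight G lam ξ / ∑ ξ' : V → SignType, wrWeight G lam ξ'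

/-- The site configuration `|ξ|` of occupied vertices of `ξ`. -/
def absConfig (ξ : V → SignType) : V → Bool := fun x => decide (ξ x ≠ 0)

/-!
For a fixed occupied set `η`, a sign configuration `ξ` with `|ξ| = η` satisfies the
Widom–Rowlinson constraint exactly when it is constant on every open cluster of `η`; so there are
`2 ^ k(η)` such configurations, each of weight `λ ^ |η|`, and the Widom–Rowlinson partition
function is `∑ η, λ ^ |η| * 2 ^ k(η)`. With `p = λ / (1 + λ)` the Bernoulli factor
`p ^ |η| * (1 - p) ^ (n - |η|)` equals `λ ^ |η| / (1 + λ) ^ n`, so the site-random-cluster weight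
with `q = 2` is the same `λ ^ |η| * 2 ^ k(η)` up to the constant `(1 + λ) ^ n`.
-/

open SimpleGraph

theorem SimpleGraph.Reachable.apply_eq_of_forall_adj {α β : Type*} {G : SimpleGraph α}
    (f : α → β) (hf : ∀ v w, G.Adj v w → f v = f w) {v w : α} (h : G.Reachable v w) :
    f v = f w := by
  obtain ⟨p⟩ := h
  induction p with
  | nil => rfl
  | cons hadj _ ih => exact (hf _ _ hadj).trans ih

section Feasible

variable {α : Type*}

abbrev IsWRFeasible (G : SimpleGraph α) (ξ : α → SignType) : Prop :=
  ∀ x y, G.Adj x y → ξ x * ξ y ≠ -1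

abbrev openGraph (G : SimpleGraph α) (η : α → Bool) : SimpleGraph {x | η x = true} :=
  G.induce {x | η x = true}

theorem absConfig_apply_eq_true {ξ : α → SignType} {x : α} :
    absConfig ξ x = true ↔ ξ x ≠ 0 := by
  simp [absConfig]

theorem IsWRFeasible.eq_of_adj {G : SimpleGraph α} {ξ : α → SignType} (hξ : IsWRFeasible G ξ)
    {a b : α} (hab : G.Adj a b) (ha : ξ a ≠ 0) (hb : ξ b ≠ 0) : ξ a = ξ b := by
  have key : ∀ s t : SignType, s ≠ 0 → t ≠ 0 → s * t ≠ -1 → s = t := by decide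
  exact key _ _ ha hb (hξ a b hab)

def clusterSigns (G : SimpleGraph α) (η : α → Bool)
    (s : (openGraph G η).ConnectedComponent → Bool) (x : α) : SignType :=
  if h : η x = true then (if s ((openGraph G η).connectedComponentMk ⟨x, h⟩) then 1 else -1)
  else 0

section ClusterSigns

variable (G : SimpleGraph α) (η : α → Bool)

theorem isWRFeasible_clusterSigns (s : (openGraph G η).ConnectedComponent → Bool) :
    IsWRFeasible G (clusterSigns G η s) := by
  intro x y hxy
  by_cases hx : η x = true
  · by_cases hy : η y = true
    · have hsame : (openGraph G η).connectedComponentMk ⟨x, hx⟩ =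
          (openGraph G η).connectedComponentMk ⟨y, hy⟩ :=
        ConnectedComponent.connectedComponentMk_eq_of_adj hxy
      simp only [clusterSigns, dif_pos hx, dif_pos hy, hsame]
      cases s ((openGraph G η).connectedComponentMk ⟨y, hy⟩) <;> decide
    · simp [clusterSigns, hy]
  · simp [clusterSigns, hx]

theorem absConfig_clusterSigns (s : (openGraph G η).ConnectedComponent → Bool) :
    absConfig (clusterSigns G η s) = η := by
  funext x
  by_cases hx : η x = true
  · cases hs : s ((openGraph G η).connectedComponentMk ⟨x, hx⟩) <;>
      simp [absConfig, clusterSigns, hx, hs]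
  · simp [absConfig, clusterSigns, hx]

theorem decide_clusterSigns_eq_one (s : (openGraph G η).ConnectedComponent → Bool)
    (v : {x | η x = true}) :
    decide (clusterSigns G η s v = 1) = s ((openGraph G η).connectedComponentMk v) := by
  have hv : η v = true := v.2
  cases hs : s ((openGraph G η).connectedComponentMk v) <;> simp [clusterSigns, hv, hs]

theorem clusterSigns_injective : Function.Injective (clusterSigns G η) := by
  intro s t hst
  funext c
  induction c using ConnectedComponent.ind with
  | h v => rw [← decide_clusterSigns_eq_one G η s v, ← decide_clusterSigns_eq_one G η t v, hst]

theorem exists_clusterSigns_eq {ξ : α → SignType} (hξ : IsWRFeasible G ξ)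
    (habs : absConfig ξ = η) : ∃ s, clusterSigns G η s = ξ := by
  have hopen : ∀ v : {x | η x = true}, ξ v ≠ 0 := fun v =>
    absConfig_apply_eq_true.mp ((congrFun habs v).trans v.2)
  have hconst : ∀ v w : {x | η x = true}, (openGraph G η).Adj v w → ξ v = ξ w :=
    fun v w hvw => hξ.eq_of_adj hvw (hopen v) (hopen w)
  refine ⟨ConnectedComponent.lift (fun v => decide (ξ v = 1)) fun v w p _ =>
    congrArg (decide <| · = 1)
      (p.reachable.apply_eq_of_forall_adj (fun v : {x | η x = true} ↦ ξ v) hconst), ?_⟩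
  funext x
  by_cases hx : η x = true
  · have hsign : ∀ t : SignType, t ≠ 0 → (if decide (t = 1) then 1 else -1) = t := by decide
    simpa [clusterSigns, hx] using hsign _ (hopen ⟨x, hx⟩)
  · have hξx : ξ x = 0 := by simpa [← habs, absConfig] using hx
    simp [clusterSigns, hx, hξx]

theorem card_absConfig_fiber_feasible [Fintype α] [DecidableEq α] :
    #{ξ | absConfig ξ = η ∧ IsWRFeasible G ξ} = 2 ^ siteClusters G η := by
  have hfiber : ({ξ | absConfig ξ = η ∧ IsWRFeasible G ξ} : Finset (α → SignType)) =
      univ.image (clusterSigns G η) := by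
    ext ξ
    simp only [mem_filter, mem_univ, true_and, mem_image]
    constructor
    · rintro ⟨habs, hξ⟩
      exact exists_clusterSigns_eq G η hξ habs
    · rintro ⟨s, rfl⟩
      exact ⟨absConfig_clusterSigns G η s, isWRFeasible_clusterSigns G η s⟩
  rw [hfiber, card_image_of_injective _ (clusterSigns_injective G η), card_univ,
    Fintype.card_fun, Fintype.card_bool, siteClusters, Nat.card_eq_fintype_card]

end ClusterSigns

variable [Fintype α]

theorem prod_pow_ite_eq_pow_card_absConfig (lam : ℝ) (ξ : α → SignType) :
    ∏ x, lam ^ (if ξ x = 0 then 0 else 1) = lam ^ #{x | absConfig ξ x} := by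
  rw [prod_pow_eq_pow_sum, card_filter]
  congr 1
  refine sum_congr rfl fun x _ => ?_
  by_cases h : ξ x = 0 <;> simp [absConfig, h]

theorem wrWeight_of_isWRFeasible {G : SimpleGraph α} {ξ : α → SignType} (lam : ℝ)
    (hξ : IsWRFeasible G ξ) : wrWeight G lam ξ = lam ^ #{x | absConfig ξ x} := by
  rw [wrWeight, if_pos hξ, one_mul, prod_pow_ite_eq_pow_card_absConfig]

theorem wrWeight_of_not_isWRFeasible {G : SimpleGraph α} {ξ : α → SignType} (lam : ℝ)
    (hξ : ¬ IsWRFeasible G ξ) : wrWeight G lam ξ = 0 := by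
  rw [wrWeight, if_neg hξ, zero_mul]

theorem sum_wrWeight_absConfig_fiber [DecidableEq α] (G : SimpleGraph α) (lam : ℝ)
    (η : α → Bool) :
    ∑ ξ with absConfig ξ = η, wrWeight G lam ξ = lam ^ #{x | η x} * 2 ^ siteClusters G η := by
  calc ∑ ξ with absConfig ξ = η, wrWeight G lam ξ
      = ∑ ξ with absConfig ξ = η, if IsWRFeasible G ξ then lam ^ #{x | η x} else 0 := by
        refine sum_congr rfl fun ξ hξ => ?_
        rw [(mem_filter.mp hξ).2.symm]
        split_ifs with hfeas
        · exact wrWeight_of_isWRFeasible lam hfeas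
        · exact wrWeight_of_not_isWRFeasible lam hfeas
    _ = lam ^ #{x | η x} * 2 ^ siteClusters G η := by
        rw [← sum_filter, filter_filter, sum_const, card_absConfig_fiber_feasible, nsmul_eq_mul,
          mul_comm]
        push_cast
        rfl

theorem sum_wrWeight [DecidableEq α] (G : SimpleGraph α) (lam : ℝ) :
    ∑ ξ, wrWeight G lam ξ = ∑ η, lam ^ #{x | η x} * 2 ^ siteClusters G η := by
  rw [← sum_fiberwise univ absConfig]
  exact sum_congr rfl fun η _ => sum_wrWeight_absConfig_fiber G lam η

theorem prod_bWeight_div_one_add {lam : ℝ} (hlam : 1 + lam ≠ 0) (η : α → Bool) :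
    ∏ x, bWeight (lam / (1 + lam)) (η x) = lam ^ #{x | η x} / (1 + lam) ^ Fintype.card α := by
  have hb : ∀ b, bWeight (lam / (1 + lam)) b = (if b then lam else 1) / (1 + lam) := by
    intro b
    cases b
    · simp only [bWeight, Bool.false_eq_true, if_false]; field_simp; ring
    · simp [bWeight]
  rw [prod_congr rfl fun x _ => hb (η x), prod_div_distrib, prod_ite, prod_const_one, mul_one,
    prod_const, prod_const, card_univ]

theorem siteRCWeight_div_one_add (G : SimpleGraph α) {lam : ℝ} (hlam : 1 + lam ≠ 0) (q : ℝ)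
    (η : α → Bool) : siteRCWeight G (lam / (1 + lam)) q η =
      lam ^ #{x | η x} * q ^ siteClusters G η / (1 + lam) ^ Fintype.card α := by
  rw [siteRCWeight, prod_bWeight_div_one_add hlam, div_mul_eq_mul_div]

end Feasible

/-- The Widom–Rowlinson measure is obtained from the
site-random-cluster measure with `q = 2` by assigning independent uniform signs
to the open clusters: `μ^G_λ(ξ) = 1{ξ feasible} · ψ^G_{p,2}(|ξ|) · 2^{-k(|ξ|)}`. -/
theorem wr_from_siteRC (G : SimpleGraph V) (lam : ℝ) (hlam : 0 < lam)
    (p : ℝ) (hp : p = lam / (1 + lam)) (ξ : V → SignType) :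
    wrMeasure G lam ξ =
      (if ∀ x y : V, G.Adj x y → ξ x * ξ y ≠ -1 then 1 else 0) *
        siteRCMeasure G p 2 (absConfig ξ) *
        ((2 : ℝ) ^ (-(siteClusters G (absConfig ξ) : ℤ))) := by
  have h1lam : 1 + lam ≠ 0 := by positivity
  by_cases hξ : IsWRFeasible G ξ
  · rw [if_pos hξ, one_mul, wrMeasure, siteRCMeasure, wrWeight_of_isWRFeasible lam hξ,
      sum_wrWeight, hp]
    simp_rw [siteRCWeight_div_one_add G h1lam, ← sum_div]
    rw [zpow_neg, zpow_natCast]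
    field_simp
  · rw [if_neg hξ, zero_mul, zero_mul, wrMeasure, wrWeight_of_not_isWRFeasible lam hξ, zero_div]
end
end

section
/- Let T = (L, B) be a finite tree (a finite connected graph with no cycles), let W ⊆ L be a nonempty boundary set, and let x ∈ L. For β ≥ 0 let μ^+_β be the Ising measure on {−1,+1}^L with plus boundary condition on W, i.e. μ^+_β(σ) is proportional to 1{σ(w) = +1 for all w ∈ W}·exp(β ∑_{⟨xy⟩∈B} σ(x)σ(y)), and let {x ↔+ W} be the event that there is a path in T from x to some vertex of W all of whose vertices carry spin +1. Then the plus-percolation probability is nondecreasing in β: for all 0 ≤ β₁ ≤ β₂, μ^+_{β₁}(x ↔+ W) ≤ μ^+_{β₂}(x ↔+ W). -/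
/-!
The `β`-derivative of `μ_β(x ↔+ W)` is the covariance of the event with the energy
`∑_{uv} σ_u σ_v`, so it suffices that each edge term `σ_u σ_v` is nonnegatively correlated with
the event. Cut the tree at `uv`, with `x` on the side `S` of `u`. The event is the disjoint union
of `{x ↔+ W inside S}` and `{not that, but x ↔+ u and v ↔+ W off the edge uv}`; on the second
piece `σ_u σ_v` takes its maximum `1`, which makes the covariance nonnegative. The first depends only
on the spins in `S`, so by the Markov property the edge term may be replaced by its conditional
expectation `φ(σ_u)`. The far side sees `σ_u = ±1` as a `±` boundary condition, hence `φ` is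
increasing by Holley's inequality, and the FKG inequality for the Ising measure concludes.
-/

open Finset

noncomputable section

open scoped Classical

variable {V : Type*}

/-- The real spin value `±1` of a Boolean spin. -/
def spinVal (b : Bool) : ℝ := if b then 1 else -1

/-- The product `σ(x)σ(y)` of the spins across an unordered pair. -/
def edgeCorr (σ : V → Bool) : Sym2 V → ℝ :=
  Sym2.lift ⟨fun x y => spinVal (σ x) * spinVal (σ y), fun x y => by ring⟩

variable [Fintype V] [DecidableEq V]

/-- Unnormalized Ising weight with plus boundary condition on `W`:
`1{σ ≡ +1 on W} · exp(β ∑_{⟨xy⟩∈B} σ(x)σ(y))`. -/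
def isingPlusWeight (G : SimpleGraph V) [Fintype G.edgeSet] (β : ℝ) (W : Set V)
    (σ : V → Bool) : ℝ :=
  (if ∀ w ∈ W, σ w = true then 1 else 0) *
    Real.exp (β * ∑ e : G.edgeSet, edgeCorr σ e.val)

/-- The Ising measure `μ^+_β` with plus boundary condition on `W`. -/
def isingPlusMeasure (G : SimpleGraph V) [Fintype G.edgeSet] (β : ℝ) (W : Set V)
    (σ : V → Bool) : ℝ :=
  isingPlusWeight G β W σ / ∑ σ' : V → Bool, isingPlusWeight G β W σ'

/-- The subgraph of `G` on the plus spins of `σ`. -/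
def plusGraph (G : SimpleGraph V) (σ : V → Bool) : SimpleGraph V where
  Adj a b := G.Adj a b ∧ σ a = true ∧ σ b = true
  symm := ⟨fun a b h => ⟨h.1.symm, h.2.2, h.2.1⟩⟩
  loopless := ⟨fun a h => G.loopless.irrefl a h.1⟩

/-- The event `{x ↔+ W}`: there is a path from `x` to `W` all of whose vertices
carry spin `+1`. -/
def PlusConn (G : SimpleGraph V) (σ : V → Bool) (x : V) (W : Set V) : Prop :=
  σ x = true ∧ ∃ w ∈ W, (plusGraph G σ).Reachable x w

set_option linter.unusedSectionVars false

section WeightedCovariance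

variable {α : Type*} [Fintype α]

/-- `(∑ μ)² · Cov(f, g)` under the probability measure proportional to `μ`. -/
def weightedCov (μ f g : α → ℝ) : ℝ :=
  (∑ a, μ a) * ∑ a, μ a * (f a * g a) - (∑ a, μ a * f a) * ∑ a, μ a * g a

lemma weightedCov_comm (μ f g : α → ℝ) : weightedCov μ f g = weightedCov μ g f := by
  simp only [weightedCov, mul_comm (f _)]
  ring

lemma weightedCov_add_left (μ f₁ f₂ g : α → ℝ) :
    weightedCov μ (fun a => f₁ a + f₂ a) g = weightedCov μ f₁ g + weightedCov μ f₂ g := by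
  simp only [weightedCov, add_mul, mul_add, sum_add_distrib]
  ring

lemma weightedCov_add_const_left (μ f g : α → ℝ) (c : ℝ) :
    weightedCov μ (fun a => f a + c) g = weightedCov μ f g := by
  have h₁ : ∑ a, μ a * ((f a + c) * g a) = ∑ a, μ a * (f a * g a) + c * ∑ a, μ a * g a := by
    rw [mul_sum, ← sum_add_distrib]
    exact sum_congr rfl fun a _ => by ring
  have h₂ : ∑ a, μ a * (f a + c) = ∑ a, μ a * f a + c * ∑ a, μ a := by
    rw [mul_sum, ← sum_add_distrib]
    exact sum_congr rfl fun a _ => by ring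
  simp only [weightedCov, h₁, h₂]
  ring

lemma weightedCov_sum_right {ι : Type*} (s : Finset ι) (μ f : α → ℝ) (g : ι → α → ℝ) :
    weightedCov μ f (fun a => ∑ i ∈ s, g i a) = ∑ i ∈ s, weightedCov μ f (g i) := by
  simp only [weightedCov, mul_sum, sum_sub_distrib]
  rw [sum_comm, sum_comm (s := univ)]

lemma weightedCov_nonneg_of_mul_eq (μ f g : α → ℝ) (hμ : 0 ≤ μ) (hf : 0 ≤ f) (hg : g ≤ 1)
    (hfg : ∀ a, f a * g a = f a) : 0 ≤ weightedCov μ f g := by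
  have hsum : ∑ a, μ a * g a ≤ ∑ a, μ a :=
    sum_le_sum fun a _ => mul_le_of_le_one_right (hμ a) (hg a)
  have hμf : 0 ≤ ∑ a, μ a * f a := sum_nonneg fun a _ => mul_nonneg (hμ a) (hf a)
  simp only [weightedCov, hfg]
  nlinarith

lemma exists_add_const_nonneg (f : α → ℝ) : ∃ c : ℝ, ∀ a, 0 ≤ f a + c :=
  ⟨∑ a, |f a|, fun a => by
    have := single_le_sum (fun b _ => abs_nonneg (f b)) (mem_univ a)
    linarith [neg_abs_le (f a)]⟩

variable [DistribLattice α]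

/-- The FKG inequality, for monotone functions of any sign. -/
theorem weightedCov_nonneg_of_monotone {μ f g : α → ℝ} (hμ : 0 ≤ μ)
    (hlat : ∀ a b, μ a * μ b ≤ μ (a ⊓ b) * μ (a ⊔ b)) (hf : Monotone f) (hg : Monotone g) :
    0 ≤ weightedCov μ f g := by
  obtain ⟨c, hc⟩ := exists_add_const_nonneg f
  obtain ⟨d, hd⟩ := exists_add_const_nonneg g
  have key := fkg (fun a => f a + c) (fun a => g a + d) μ hμ hc hd
    (fun a b hab => by simpa using hf hab) (fun a b hab => by simpa using hg hab) hlat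
  rw [← weightedCov_add_const_left μ f g c, weightedCov_comm,
    ← weightedCov_add_const_left μ g _ d, weightedCov_comm, weightedCov]
  linarith

/-- The Holley inequality `E_μ h ≤ E_ν h`, for a monotone `h` of any sign. -/
theorem holley_of_monotone {μ ν h : α → ℝ} (hμ : 0 ≤ μ) (hν : 0 ≤ ν)
    (hlat : ∀ a b, μ a * ν b ≤ μ (a ⊓ b) * ν (a ⊔ b)) (hh : Monotone h) :
    (∑ a, μ a * h a) * ∑ a, ν a ≤ (∑ a, ν a * h a) * ∑ a, μ a := by
  obtain ⟨c, hc⟩ := exists_add_const_nonneg h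
  have hμs : 0 ≤ ∑ a, μ a := sum_nonneg fun a _ => hμ a
  have hνs : 0 ≤ ∑ a, ν a := sum_nonneg fun a _ => hν a
  have key := holley (fun a => μ a * ∑ b, ν b) (fun a => ν a * ∑ b, μ b) (fun a => h a + c)
    hc (fun a => mul_nonneg (hμ a) hνs) (fun a => mul_nonneg (hν a) hμs)
    (fun a b hab => by simpa using hh hab) (by rw [← sum_mul, ← sum_mul, mul_comm])
    (fun a b => by
      have := mul_le_mul_of_nonneg_right (hlat a b) (mul_nonneg hνs hμs)
      linarith)
  have e₁ : ∑ a, (h a + c) * (μ a * ∑ b, ν b) =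
      (∑ a, μ a * h a) * (∑ b, ν b) + c * ((∑ a, μ a) * ∑ b, ν b) := by
    rw [sum_mul, sum_mul, mul_sum, ← sum_add_distrib]
    exact sum_congr rfl fun a _ => by ring
  have e₂ : ∑ a, (h a + c) * (ν a * ∑ b, μ b) =
      (∑ a, ν a * h a) * (∑ b, μ b) + c * ((∑ a, ν a) * ∑ b, μ b) := by
    rw [sum_mul, sum_mul, mul_sum, ← sum_add_distrib]
    exact sum_congr rfl fun a _ => by ring
  rw [e₁, e₂, mul_comm (∑ a, ν a)] at key
  linarith

end WeightedCovariance

section Spins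

lemma spinVal_true : spinVal true = 1 := rfl

lemma spinVal_false : spinVal false = -1 := rfl

lemma spinVal_not (b : Bool) : spinVal (!b) = -spinVal b := by
  cases b <;> simp [spinVal]

lemma spinVal_monotone : Monotone spinVal := by
  intro a b hab
  cases a <;> cases b <;> simp_all [spinVal, Bool.le_iff_imp]

lemma spinVal_inf_add_spinVal_sup (a b : Bool) :
    spinVal (a ⊓ b) + spinVal (a ⊔ b) = spinVal a + spinVal b := by
  cases a <;> cases b <;> simp [spinVal, add_comm]

lemma spinVal_mul_add_spinVal_mul_le (a b c d : Bool) :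
    spinVal a * spinVal c + spinVal b * spinVal d ≤
      spinVal (a ⊓ b) * spinVal (c ⊓ d) + spinVal (a ⊔ b) * spinVal (c ⊔ d) := by
  cases a <;> cases b <;> cases c <;> cases d <;> norm_num [spinVal]

lemma edgeCorr_mk (σ : V → Bool) (a b : V) :
    edgeCorr σ s(a, b) = spinVal (σ a) * spinVal (σ b) := rfl

lemma edgeCorr_le_one (σ : V → Bool) (e : Sym2 V) : edgeCorr σ e ≤ 1 := by
  induction e using Sym2.ind with
  | _ a b => rw [edgeCorr_mk]; cases σ a <;> cases σ b <;> norm_num [spinVal]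

lemma edgeCorr_add_le (σ τ : V → Bool) (e : Sym2 V) :
    edgeCorr σ e + edgeCorr τ e ≤ edgeCorr (σ ⊓ τ) e + edgeCorr (σ ⊔ τ) e := by
  induction e using Sym2.ind with
  | _ a b => exact spinVal_mul_add_spinVal_mul_le _ _ _ _

lemma edgeCorr_compl (σ : V → Bool) (e : Sym2 V) : edgeCorr σᶜ e = edgeCorr σ e := by
  induction e using Sym2.ind with
  | _ a b => simp only [edgeCorr_mk, Pi.compl_apply, Bool.compl_eq_bnot, spinVal_not]; ring

lemma edgeCorr_congr {σ τ : V → Bool} {e : Sym2 V} (h : ∀ z ∈ e, σ z = τ z) :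
    edgeCorr σ e = edgeCorr τ e := by
  induction e using Sym2.ind with
  | _ a b => rw [edgeCorr_mk, edgeCorr_mk, h a (by simp), h b (by simp)]

end Spins

section Weights

def plusInd (W : Set V) (σ : V → Bool) : ℝ :=
  if ∀ w ∈ W, σ w = true then 1 else 0

lemma plusInd_nonneg (W : Set V) (σ : V → Bool) : 0 ≤ plusInd W σ := by
  unfold plusInd; positivity

lemma plusInd_congr {W : Set V} {σ τ : V → Bool} (h : ∀ w ∈ W, σ w = τ w) :
    plusInd W σ = plusInd W τ := by
  unfold plusInd
  exact if_congr ⟨fun h' w hw => h w hw ▸ h' w hw, fun h' w hw => (h w hw).trans (h' w hw)⟩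
    rfl rfl

lemma ite_mul_ite_le {P Q R T : Prop} [Decidable P] [Decidable Q] [Decidable R] [Decidable T]
    (h : P → Q → R ∧ T) :
    (if P then (1 : ℝ) else 0) * (if Q then 1 else 0) ≤
      (if R then 1 else 0) * (if T then 1 else 0) := by
  by_cases hP : P <;> by_cases hQ : Q
  · simp [hP, hQ, (h hP hQ).1, (h hP hQ).2]
  all_goals simp only [hP, hQ, if_false, mul_zero, zero_mul]; positivity

lemma plusInd_mul_le (W : Set V) (σ τ : V → Bool) :
    plusInd W σ * plusInd W τ ≤ plusInd W (σ ⊓ τ) * plusInd W (σ ⊔ τ) :=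
  ite_mul_ite_le fun hσ hτ => ⟨fun w hw => by simp [hσ w hw, hτ w hw],
    fun w hw => by simp [hσ w hw]⟩

lemma plusInd_compl_mul_le (W : Set V) (σ τ : V → Bool) :
    plusInd W σᶜ * plusInd W τ ≤ plusInd W (σ ⊓ τ)ᶜ * plusInd W (σ ⊔ τ) :=
  ite_mul_ite_le fun hσ hτ => ⟨fun w hw => by simpa [hτ w hw] using hσ w hw,
    fun w hw => by simp [hτ w hw]⟩

lemma plusInd_inter_mul_plusInd_inter_compl (W S : Set V) (σ : V → Bool) :
    plusInd (W ∩ S) σ * plusInd (W ∩ Sᶜ) σ = plusInd W σ := by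
  unfold plusInd
  by_cases h : ∀ w ∈ W, σ w = true
  · rw [if_pos fun w hw => h w hw.1, if_pos fun w hw => h w hw.1, if_pos h, one_mul]
  · obtain ⟨w, hw, hσw⟩ := not_forall₂.1 h
    rw [if_neg h]
    by_cases hS : w ∈ S
    · rw [if_neg fun h' => hσw (h' w ⟨hw, hS⟩), zero_mul]
    · rw [if_neg fun (h' : ∀ w ∈ W ∩ Sᶜ, σ w = true) => hσw (h' w ⟨hw, hS⟩), mul_zero]

lemma mul_exp_mul_mul_exp_le {i₁ i₂ i₃ i₄ a₁ a₂ a₃ a₄ β : ℝ} (hi₀ : 0 ≤ i₁ * i₂)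
    (hi : i₁ * i₂ ≤ i₃ * i₄) (ha : a₁ + a₂ ≤ a₃ + a₄) (hβ : 0 ≤ β) :
    i₁ * Real.exp (β * a₁) * (i₂ * Real.exp (β * a₂)) ≤
      i₃ * Real.exp (β * a₃) * (i₄ * Real.exp (β * a₄)) := by
  have hexp : Real.exp (β * (a₁ + a₂)) ≤ Real.exp (β * (a₃ + a₄)) :=
    Real.exp_le_exp.2 (mul_le_mul_of_nonneg_left ha hβ)
  calc i₁ * Real.exp (β * a₁) * (i₂ * Real.exp (β * a₂))
      = i₁ * i₂ * Real.exp (β * (a₁ + a₂)) := by rw [mul_add, Real.exp_add]; ring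
    _ ≤ i₃ * i₄ * Real.exp (β * (a₃ + a₄)) :=
        mul_le_mul hi hexp (Real.exp_pos _).le (hi₀.trans hi)
    _ = i₃ * Real.exp (β * a₃) * (i₄ * Real.exp (β * a₄)) := by rw [mul_add, Real.exp_add]; ring

variable (G : SimpleGraph V) [Fintype G.edgeSet]

lemma isingPlusWeight_eq (β : ℝ) (W : Set V) (σ : V → Bool) :
    isingPlusWeight G β W σ = plusInd W σ * Real.exp (β * ∑ e : G.edgeSet, edgeCorr σ e) :=
  rfl

lemma isingPlusWeight_nonneg (β : ℝ) (W : Set V) (σ : V → Bool) :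
    0 ≤ isingPlusWeight G β W σ :=
  mul_nonneg (plusInd_nonneg W σ) (Real.exp_pos _).le

lemma sum_isingPlusWeight_pos (β : ℝ) (W : Set V) : 0 < ∑ σ, isingPlusWeight G β W σ :=
  sum_pos' (fun σ _ => isingPlusWeight_nonneg G β W σ)
    ⟨⊤, mem_univ _, by simp [isingPlusWeight_eq, plusInd, Real.exp_pos]⟩

lemma isingPlusWeight_mul_le {β : ℝ} (hβ : 0 ≤ β) (W : Set V) (σ τ : V → Bool) :
    isingPlusWeight G β W σ * isingPlusWeight G β W τ ≤
      isingPlusWeight G β W (σ ⊓ τ) * isingPlusWeight G β W (σ ⊔ τ) := by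
  simp only [isingPlusWeight_eq]
  refine mul_exp_mul_mul_exp_le (mul_nonneg (plusInd_nonneg W σ) (plusInd_nonneg W τ))
    (plusInd_mul_le W σ τ) ?_ hβ
  rw [← sum_add_distrib, ← sum_add_distrib]
  exact sum_le_sum fun e _ => edgeCorr_add_le σ τ e

def edgeCorrWithin (S : Set V) (σ : V → Bool) : ℝ :=
  ∑ e ∈ univ.filter (fun e : G.edgeSet => ∀ z ∈ (e : Sym2 V), z ∈ S), edgeCorr σ e

lemma edgeCorrWithin_congr {S : Set V} {σ τ : V → Bool} (h : ∀ z ∈ S, σ z = τ z) :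
    edgeCorrWithin G S σ = edgeCorrWithin G S τ :=
  sum_congr rfl fun _ he => edgeCorr_congr fun z hz => h z ((mem_filter.1 he).2 z hz)

lemma edgeCorrWithin_add_le (S : Set V) (σ τ : V → Bool) :
    edgeCorrWithin G S σ + edgeCorrWithin G S τ ≤
      edgeCorrWithin G S (σ ⊓ τ) + edgeCorrWithin G S (σ ⊔ τ) := by
  unfold edgeCorrWithin
  rw [← sum_add_distrib, ← sum_add_distrib]
  exact sum_le_sum fun e _ => edgeCorr_add_le σ τ e

def sideWeight (β : ℝ) (W S : Set V) (σ : V → Bool) : ℝ :=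
  plusInd (W ∩ S) σ * Real.exp (β * edgeCorrWithin G S σ)

lemma sideWeight_nonneg (β : ℝ) (W S : Set V) (σ : V → Bool) : 0 ≤ sideWeight G β W S σ :=
  mul_nonneg (plusInd_nonneg _ σ) (Real.exp_pos _).le

lemma sideWeight_top_pos (β : ℝ) (W S : Set V) : 0 < sideWeight G β W S ⊤ := by
  simp [sideWeight, plusInd, Real.exp_pos]

lemma sideWeight_congr (β : ℝ) (W : Set V) {S : Set V} {σ τ : V → Bool}
    (h : ∀ z ∈ S, σ z = τ z) : sideWeight G β W S σ = sideWeight G β W S τ := by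
  rw [sideWeight, sideWeight, plusInd_congr fun w hw => h w hw.2, edgeCorrWithin_congr G h]

/-- `σ ↦ sideWeight σᶜ` is the weight with minus boundary condition on `W ∩ S`. -/
lemma sideWeight_compl_mul_le {β : ℝ} (hβ : 0 ≤ β) (W S : Set V) (σ τ : V → Bool) :
    sideWeight G β W S σᶜ * sideWeight G β W S τ ≤
      sideWeight G β W S (σ ⊓ τ)ᶜ * sideWeight G β W S (σ ⊔ τ) := by
  have hcompl : ∀ ρ : V → Bool, edgeCorrWithin G S ρᶜ = edgeCorrWithin G S ρ := fun ρ =>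
    sum_congr rfl fun e _ => edgeCorr_compl ρ e
  simp only [sideWeight, hcompl]
  exact mul_exp_mul_mul_exp_le (mul_nonneg (plusInd_nonneg _ _) (plusInd_nonneg _ _))
    (plusInd_compl_mul_le _ σ τ) (edgeCorrWithin_add_le G S σ τ) hβ

end Weights

structure IsSingleEdgeCut (G : SimpleGraph V) (S : Set V) (u v : V) : Prop where
  adj : G.Adj u v
  left_mem : u ∈ S
  right_notMem : v ∉ S
  eq_of_adj : ∀ ⦃a b⦄, G.Adj a b → a ∈ S → b ∉ S → a = u ∧ b = v

namespace IsSingleEdgeCut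

variable {G : SimpleGraph V} [Fintype G.edgeSet] {S : Set V} {u v : V}

lemma edgeCorr_eq (hS : IsSingleEdgeCut G S u v) (σ : V → Bool) {e : Sym2 V}
    (he : e ∈ G.edgeSet) :
    edgeCorr σ e = (if ∀ z ∈ e, z ∈ S then edgeCorr σ e else 0) +
      (if ∀ z ∈ e, z ∈ Sᶜ then edgeCorr σ e else 0) +
      (if e = s(u, v) then edgeCorr σ e else 0) := by
  induction e using Sym2.ind with
  | _ a b =>
  have hab : G.Adj a b := he
  have huv : ¬ ∀ z ∈ s(u, v), z ∈ S := fun h => hS.right_notMem (h v (by simp))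
  have huv' : ¬ ∀ z ∈ s(u, v), z ∈ Sᶜ := fun h => h u (by simp) hS.left_mem
  by_cases ha : a ∈ S <;> by_cases hb : b ∈ S
  · have hne : s(a, b) ≠ s(u, v) := fun h => huv (h ▸ by simp [ha, hb])
    simp [ha, hb, hne]
  · obtain ⟨rfl, rfl⟩ := hS.eq_of_adj hab ha hb
    simp [ha, hb]
  · obtain ⟨rfl, rfl⟩ := hS.eq_of_adj hab.symm hb ha
    simp [ha, hb, Sym2.eq_swap]
  · have hne : s(a, b) ≠ s(u, v) := fun h => huv' (h ▸ by simp [ha, hb])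
    simp [ha, hb, hne]

lemma sum_edgeCorr_eq (hS : IsSingleEdgeCut G S u v) (σ : V → Bool) :
    ∑ e : G.edgeSet, edgeCorr σ e =
      edgeCorrWithin G S σ + edgeCorrWithin G Sᶜ σ + edgeCorr σ s(u, v) := by
  have hedge : ∑ e : G.edgeSet, (if (e : Sym2 V) = s(u, v) then edgeCorr σ e else 0) =
      edgeCorr σ s(u, v) := by
    rw [Fintype.sum_eq_single ⟨s(u, v), hS.adj⟩ fun e he => if_neg fun h => he (Subtype.ext h)]
    exact if_pos rfl
  rw [sum_congr rfl fun e _ => hS.edgeCorr_eq σ e.2, sum_add_distrib, sum_add_distrib, hedge,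
    edgeCorrWithin, edgeCorrWithin, sum_filter, sum_filter]
  congr 2
  exact sum_congr rfl fun _ _ => by congr

lemma isingPlusWeight_eq_mul (hS : IsSingleEdgeCut G S u v) (β : ℝ) (W : Set V)
    (σ : V → Bool) :
    isingPlusWeight G β W σ = sideWeight G β W S σ * sideWeight G β W Sᶜ σ *
      Real.exp (β * edgeCorr σ s(u, v)) := by
  rw [isingPlusWeight_eq, hS.sum_edgeCorr_eq, ← plusInd_inter_mul_plusInd_inter_compl W S,
    sideWeight, sideWeight, mul_add, mul_add, Real.exp_add, Real.exp_add]
  ring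

lemma of_not_reachable {x : V} (huv : G.Adj u v)
    (hbridge : ¬ (G.deleteEdges {s(u, v)}).Reachable u v)
    (hxu : (G.deleteEdges {s(u, v)}).Reachable x u) :
    IsSingleEdgeCut G {z | (G.deleteEdges {s(u, v)}).Reachable x z} u v := by
  refine ⟨huv, hxu, fun hxv => hbridge (hxu.symm.trans hxv), fun a b hab ha hb => ?_⟩
  by_cases he : s(a, b) = s(u, v)
  · rcases Sym2.eq_iff.1 he with h | ⟨rfl, rfl⟩
    exacts [h, absurd (hxu.symm.trans ha) hbridge]
  · exact absurd (ha.trans (SimpleGraph.deleteEdges_adj.2 ⟨hab, by simpa using he⟩).reachable) hb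

end IsSingleEdgeCut

section Glue

variable (S : Set V)

def glue (α : {z // z ∈ S} → Bool) (γ : {z // z ∉ S} → Bool) : V → Bool :=
  (Equiv.piEquivPiSubtypeProd (· ∈ S) fun _ => Bool).symm (α, γ)

variable {S}

@[simp] lemma glue_of_mem {α γ} {z : V} (h : z ∈ S) : glue S α γ z = α ⟨z, h⟩ := by
  simp [glue, h]

@[simp] lemma glue_of_notMem {α γ} {z : V} (h : z ∉ S) : glue S α γ z = γ ⟨z, h⟩ := by
  simp [glue, h]

variable (S) in
lemma sum_eq_sum_glue (f : (V → Bool) → ℝ) : ∑ σ, f σ = ∑ α, ∑ γ, f (glue S α γ) := by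
  rw [← (Equiv.piEquivPiSubtypeProd (· ∈ S) fun _ => Bool).symm.sum_comp, Fintype.sum_prod_type]
  rfl

lemma glue_inf_glue (α α' γ γ') : glue S α γ ⊓ glue S α' γ' = glue S (α ⊓ α') (γ ⊓ γ') := by
  funext z
  by_cases h : z ∈ S <;> simp [h]

lemma glue_sup_glue (α α' γ γ') : glue S α γ ⊔ glue S α' γ' = glue S (α ⊔ α') (γ ⊔ γ') := by
  funext z
  by_cases h : z ∈ S <;> simp [h]

lemma glue_top_top : glue S ⊤ ⊤ = ⊤ := by
  funext z
  by_cases h : z ∈ S <;> simp [h]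

end Glue

section FarSide

variable (G : SimpleGraph V) [Fintype G.edgeSet] (β : ℝ) (W S : Set V)

def farWeight (γ : {z // z ∉ S} → Bool) : ℝ :=
  sideWeight G β W Sᶜ (glue S ⊤ γ)

lemma farWeight_nonneg (γ : {z // z ∉ S} → Bool) : 0 ≤ farWeight G β W S γ :=
  sideWeight_nonneg G β W Sᶜ _

lemma farWeight_compl_mul_le {β : ℝ} (hβ : 0 ≤ β) (a b : {z // z ∉ S} → Bool) :
    farWeight G β W S aᶜ * farWeight G β W S b ≤
      farWeight G β W S (a ⊓ b)ᶜ * farWeight G β W S (a ⊔ b) := by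
  have hcompl : ∀ γ, farWeight G β W S γᶜ = sideWeight G β W Sᶜ (glue S ⊤ γ)ᶜ := fun γ =>
    sideWeight_congr G β W fun z hz => by simp [glue_of_notMem hz]
  have hinf : glue S ⊤ a ⊓ glue S ⊤ b = glue S ⊤ (a ⊓ b) := by rw [glue_inf_glue, inf_idem]
  have hsup : glue S ⊤ a ⊔ glue S ⊤ b = glue S ⊤ (a ⊔ b) := by rw [glue_sup_glue, sup_idem]
  have := sideWeight_compl_mul_le G hβ W Sᶜ (glue S ⊤ a) (glue S ⊤ b)
  rwa [hinf, hsup, ← hcompl, ← hcompl] at this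

variable {S} {v : V} (hv : v ∉ S)

def farPartition (b : Bool) : ℝ :=
  ∑ γ, farWeight G β W S γ * Real.exp (β * (spinVal b * spinVal (γ ⟨v, hv⟩)))

/-- The conditional expectation of `σ_u σ_v` given `σ_u = b`, for a cut edge `uv`. -/
def condEdgeCorr (b : Bool) : ℝ :=
  (∑ γ, farWeight G β W S γ * Real.exp (β * (spinVal b * spinVal (γ ⟨v, hv⟩))) *
      (spinVal b * spinVal (γ ⟨v, hv⟩))) / farPartition G β W hv b

lemma farPartition_pos (b : Bool) : 0 < farPartition G β W hv b := by
  refine sum_pos' (fun γ _ => mul_nonneg (farWeight_nonneg G β W S γ) (Real.exp_pos _).le)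
    ⟨⊤, mem_univ _, mul_pos ?_ (Real.exp_pos _)⟩
  rw [farWeight, glue_top_top]
  exact sideWeight_top_pos G β W Sᶜ

lemma farPartition_mul_condEdgeCorr (b : Bool) :
    farPartition G β W hv b * condEdgeCorr G β W hv b =
      ∑ γ, farWeight G β W S γ * Real.exp (β * (spinVal b * spinVal (γ ⟨v, hv⟩))) *
        (spinVal b * spinVal (γ ⟨v, hv⟩)) :=
  mul_div_cancel₀ _ (farPartition_pos G β W hv b).ne'

/-- The far side feels a plus (resp. minus) spin across the cut as a plus (resp. minus) boundary
condition, so monotonicity in `b` is Holley's comparison of the two boundary conditions. -/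
theorem condEdgeCorr_monotone {β : ℝ} (hβ : 0 ≤ β) : Monotone (condEdgeCorr G β W hv) := by
  set t : ({z // z ∉ S} → Bool) → ℝ := fun γ => spinVal (γ ⟨v, hv⟩)
  -- after the flip `γ ↦ γᶜ`, the case `b = false` is the far side with minus boundary condition
  set μ := fun γ => farWeight G β W S γᶜ * Real.exp (β * t γ)
  set ν := fun γ => farWeight G β W S γ * Real.exp (β * t γ)
  have hflip : ∀ f : ({z // z ∉ S} → Bool) → ℝ, ∑ γ, f γ = ∑ γ, f γᶜ := fun f =>
    (Equiv.sum_comp (compl_involutive.toPerm _) f).symm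
  have hcompl : ∀ γ : {z // z ∉ S} → Bool, spinVal (γᶜ ⟨v, hv⟩) = -t γ := fun γ => spinVal_not _
  have htrue : condEdgeCorr G β W hv true = (∑ γ, ν γ * t γ) / ∑ γ, ν γ := by
    simp only [condEdgeCorr, farPartition, spinVal_true, one_mul, t, ν]
  have hfalse : condEdgeCorr G β W hv false = (∑ γ, μ γ * t γ) / ∑ γ, μ γ := by
    rw [condEdgeCorr, farPartition, hflip, hflip (fun γ => farWeight G β W S γ * _)]
    simp only [spinVal_false, hcompl, neg_one_mul, neg_neg]
    rfl
  have hμ : 0 < ∑ γ, μ γ := by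
    have := farPartition_pos G β W hv false
    rw [farPartition, hflip] at this
    simpa only [spinVal_false, hcompl, neg_one_mul, neg_neg] using this
  have hν : 0 < ∑ γ, ν γ := by
    simpa only [farPartition, spinVal_true, one_mul] using farPartition_pos G β W hv true
  have hlat : ∀ a b, μ a * ν b ≤ μ (a ⊓ b) * ν (a ⊔ b) := fun a b =>
    mul_exp_mul_mul_exp_le
      (mul_nonneg (farWeight_nonneg G β W S _) (farWeight_nonneg G β W S _))
      (farWeight_compl_mul_le G W S hβ a b)
      (spinVal_inf_add_spinVal_sup (a ⟨v, hv⟩) (b ⟨v, hv⟩)).ge hβ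
  have key := holley_of_monotone
    (fun γ => mul_nonneg (farWeight_nonneg G β W S _) (Real.exp_pos _).le)
    (fun γ => mul_nonneg (farWeight_nonneg G β W S _) (Real.exp_pos _).le)
    hlat (fun a b hab => spinVal_monotone (hab ⟨v, hv⟩))
  intro a b hab
  cases a <;> cases b
  · exact le_rfl
  · rw [hfalse, htrue, div_le_div_iff₀ hμ hν]
    exact key
  · exact absurd hab (by decide)
  · exact le_rfl

end FarSide

section Markov

variable {G : SimpleGraph V} [Fintype G.edgeSet] {S : Set V} {u v : V} (β : ℝ) (W : Set V)

lemma sum_isingPlusWeight_mul_eq_sum_glue (hS : IsSingleEdgeCut G S u v)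
    (Φ : (V → Bool) → ℝ) :
    ∑ σ, isingPlusWeight G β W σ * Φ σ =
      ∑ α, sideWeight G β W S (glue S α ⊤) * ∑ γ, farWeight G β W S γ *
        Real.exp (β * (spinVal (α ⟨u, hS.left_mem⟩) * spinVal (γ ⟨v, hS.right_notMem⟩))) *
          Φ (glue S α γ) := by
  rw [sum_eq_sum_glue S]
  refine sum_congr rfl fun α _ => ?_
  rw [mul_sum]
  refine sum_congr rfl fun γ _ => ?_
  have hnear : sideWeight G β W S (glue S α γ) = sideWeight G β W S (glue S α ⊤) :=
    sideWeight_congr G β W fun z hz => by simp [hz]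
  have hfar : sideWeight G β W Sᶜ (glue S α γ) = farWeight G β W S γ :=
    sideWeight_congr G β W fun z hz => by simp [glue_of_notMem hz]
  rw [hS.isingPlusWeight_eq_mul, hnear, hfar, edgeCorr_mk, glue_of_mem hS.left_mem,
    glue_of_notMem hS.right_notMem]
  ring

/-- The Markov property across the cut edge. -/
theorem sum_isingPlusWeight_mul_edgeCorr (hS : IsSingleEdgeCut G S u v)
    {F : (V → Bool) → ℝ} (hF : ∀ σ τ, (∀ z ∈ S, σ z = τ z) → F σ = F τ) :
    ∑ σ, isingPlusWeight G β W σ * (F σ * edgeCorr σ s(u, v)) =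
      ∑ σ, isingPlusWeight G β W σ * (F σ * condEdgeCorr G β W hS.right_notMem (σ u)) := by
  rw [sum_isingPlusWeight_mul_eq_sum_glue β W hS, sum_isingPlusWeight_mul_eq_sum_glue β W hS]
  refine sum_congr rfl fun α _ => ?_
  have hFα : ∀ γ, F (glue S α γ) = F (glue S α ⊤) := fun γ =>
    hF _ _ fun z hz => by simp [hz]
  simp only [hFα, edgeCorr_mk, glue_of_mem hS.left_mem, glue_of_notMem hS.right_notMem,
    mul_left_comm _ (F _), ← mul_sum, ← sum_mul]
  rw [← farPartition, farPartition_mul_condEdgeCorr]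

/-- By the Markov property this is FKG for `F` and `σ ↦ condEdgeCorr (σ u)`. -/
theorem weightedCov_edgeCorr_nonneg {β : ℝ} (hβ : 0 ≤ β) (hS : IsSingleEdgeCut G S u v)
    {F : (V → Bool) → ℝ} (hFm : Monotone F) (hF : ∀ σ τ, (∀ z ∈ S, σ z = τ z) → F σ = F τ) :
    0 ≤ weightedCov (isingPlusWeight G β W) F (fun σ => edgeCorr σ s(u, v)) := by
  have hcond := sum_isingPlusWeight_mul_edgeCorr β W hS hF
  have hcond₁ := sum_isingPlusWeight_mul_edgeCorr β W hS (F := fun _ => 1) fun _ _ _ => rfl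
  simp only [one_mul] at hcond₁
  have hcov : weightedCov (isingPlusWeight G β W) F (fun σ => edgeCorr σ s(u, v)) =
      weightedCov (isingPlusWeight G β W) F
        (fun σ => condEdgeCorr G β W hS.right_notMem (σ u)) := by
    simp only [weightedCov, hcond, hcond₁]
  rw [hcov]
  exact weightedCov_nonneg_of_monotone (isingPlusWeight_nonneg G β W)
    (isingPlusWeight_mul_le G hβ W) hFm
    fun σ τ h => condEdgeCorr_monotone G W hS.right_notMem hβ (h u)

end Markov

section PlusClusters

variable {G H : SimpleGraph V}

lemma plusGraph_le (G : SimpleGraph V) (σ : V → Bool) : plusGraph G σ ≤ G := fun _ _ h => h.1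

lemma plusGraph_mono (hGH : G ≤ H) {σ τ : V → Bool} (hστ : σ ≤ τ) :
    plusGraph G σ ≤ plusGraph H τ :=
  fun a b h => ⟨hGH h.1, Bool.le_iff_imp.1 (hστ a) h.2.1, Bool.le_iff_imp.1 (hστ b) h.2.2⟩

lemma plusGraph_deleteEdges (G : SimpleGraph V) (σ : V → Bool) (s : Set (Sym2 V)) :
    plusGraph (G.deleteEdges s) σ = (plusGraph G σ).deleteEdges s := by
  ext a b
  simp only [plusGraph, SimpleGraph.deleteEdges_adj]
  tauto

lemma spin_eq_true_of_reachable {σ : V → Bool} {a b : V} (h : (plusGraph G σ).Reachable a b)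
    (ha : σ a = true) : σ b = true := by
  obtain ⟨p⟩ := h
  induction p with
  | nil => exact ha
  | cons h _ ih => exact ih h.2.2

lemma reachable_plusGraph_of_eqOn {σ τ : V → Bool} {x a b : V}
    (h : ∀ z, G.Reachable x z → σ z = τ z) (p : (plusGraph G σ).Walk a b)
    (ha : G.Reachable x a) : (plusGraph G τ).Reachable a b := by
  induction p with
  | nil => rfl
  | @cons c d _ hcd _ ih =>
    have hd : G.Reachable x d := ha.trans hcd.1.reachable
    have hadj : (plusGraph G τ).Adj c d := ⟨hcd.1, h c ha ▸ hcd.2.1, h d hd ▸ hcd.2.2⟩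
    exact hadj.reachable.trans (ih hd)

lemma SimpleGraph.Walk.reachable_deleteEdges_or (u v : V) {a b : V} (p : G.Walk a b) :
    (G.deleteEdges {s(u, v)}).Reachable a b ∨
      (G.Adj u v ∧ (G.deleteEdges {s(u, v)}).Reachable a u ∧
        (G.deleteEdges {s(u, v)}).Reachable v b) ∨
      (G.Adj u v ∧ (G.deleteEdges {s(u, v)}).Reachable a v ∧
        (G.deleteEdges {s(u, v)}).Reachable u b) := by
  induction p with
  | nil => exact Or.inl (SimpleGraph.Reachable.refl _)
  | @cons c d _ hcd _ ih =>
    by_cases he : s(c, d) = s(u, v)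
    · rcases Sym2.eq_iff.1 he with ⟨rfl, rfl⟩ | ⟨rfl, rfl⟩
      · rcases ih with h | ⟨-, -, h⟩ | ⟨-, -, h⟩
        exacts [Or.inr (Or.inl ⟨hcd, .rfl, h⟩), Or.inr (Or.inl ⟨hcd, .rfl, h⟩), Or.inl h]
      · rcases ih with h | ⟨-, -, h⟩ | ⟨-, -, h⟩
        exacts [Or.inr (Or.inr ⟨hcd.symm, .rfl, h⟩), Or.inl h, Or.inr (Or.inr ⟨hcd.symm, .rfl, h⟩)]
    · have hcd' : (G.deleteEdges {s(u, v)}).Reachable c d :=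
        (SimpleGraph.deleteEdges_adj.2 ⟨hcd, by simpa using he⟩).reachable
      rcases ih with h | ⟨huv, h₁, h₂⟩ | ⟨huv, h₁, h₂⟩
      exacts [Or.inl (hcd'.trans h), Or.inr (Or.inl ⟨huv, hcd'.trans h₁, h₂⟩),
        Or.inr (Or.inr ⟨huv, hcd'.trans h₁, h₂⟩)]

variable {σ τ : V → Bool} {x : V} {W : Set V}

lemma PlusConn.mono (hστ : σ ≤ τ) (h : PlusConn G σ x W) : PlusConn G τ x W :=
  ⟨Bool.le_iff_imp.1 (hστ x) h.1,
    h.2.imp fun _ ⟨hw, hr⟩ => ⟨hw, hr.mono (plusGraph_mono le_rfl hστ)⟩⟩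

lemma PlusConn.of_eqOn (hστ : ∀ z, G.Reachable x z → σ z = τ z) (h : PlusConn G σ x W) :
    PlusConn G τ x W :=
  ⟨hστ x .rfl ▸ h.1, h.2.imp fun _ ⟨hw, ⟨p⟩⟩ => ⟨hw, reachable_plusGraph_of_eqOn hστ p .rfl⟩⟩

theorem plusConn_iff_of_not_reachable {u v : V} (huv : G.Adj u v)
    (hxv : ¬ (G.deleteEdges {s(u, v)}).Reachable x v) :
    PlusConn G σ x W ↔ PlusConn (G.deleteEdges {s(u, v)}) σ x W ∨
      (PlusConn (G.deleteEdges {s(u, v)}) σ x {u} ∧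
        PlusConn (G.deleteEdges {s(u, v)}) σ v W) := by
  constructor
  · rintro ⟨hx, w, hw, ⟨p⟩⟩
    rcases p.reachable_deleteEdges_or u v with h | ⟨huv', h₁, h₂⟩ | ⟨-, h₁, -⟩
    · exact Or.inl ⟨hx, w, hw, plusGraph_deleteEdges G σ _ ▸ h⟩
    · exact Or.inr ⟨⟨hx, u, rfl, plusGraph_deleteEdges G σ _ ▸ h₁⟩,
        ⟨huv'.2.2, w, hw, plusGraph_deleteEdges G σ _ ▸ h₂⟩⟩
    · exact absurd ((plusGraph_deleteEdges G σ _ ▸ h₁).mono (plusGraph_le _ σ)) hxv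
  · have hle := plusGraph_mono (G.deleteEdges_le {s(u, v)}) (le_refl σ)
    rintro (⟨hx, w, hw, h⟩ | ⟨⟨hx, u', rfl, h₁⟩, ⟨hv, w, hw, h₂⟩⟩)
    · exact ⟨hx, w, hw, h.mono hle⟩
    · have hadj : (plusGraph G σ).Adj u' v := ⟨huv, spin_eq_true_of_reachable h₁ hx, hv⟩
      exact ⟨hx, w, hw, ((h₁.mono hle).trans hadj.reachable).trans (h₂.mono hle)⟩

end PlusClusters

lemma ite_le_ite_of_imp {P Q : Prop} [Decidable P] [Decidable Q] (h : P → Q) :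
    (if P then (1 : ℝ) else 0) ≤ if Q then 1 else 0 := by
  split_ifs <;> simp_all

lemma ite_eq_ite_add_ite_of_iff {P Q R : Prop} [Decidable P] [Decidable Q] [Decidable R]
    (h : P ↔ Q ∨ R) :
    (if P then (1 : ℝ) else 0) = (if Q then 1 else 0) + if ¬Q ∧ R then 1 else 0 := by
  by_cases hQ : Q <;> by_cases hR : R <;> simp [h, hQ, hR]

section Percolation

variable {G : SimpleGraph V} [Fintype G.edgeSet] {β : ℝ} (W : Set V) (x : V)

theorem weightedCov_plusConn_edgeCorr_nonneg (hβ : 0 ≤ β) {u v : V} (huv : G.Adj u v)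
    (hbridge : ¬ (G.deleteEdges {s(u, v)}).Reachable u v)
    (hxu : (G.deleteEdges {s(u, v)}).Reachable x u) :
    0 ≤ weightedCov (isingPlusWeight G β W) (fun σ => if PlusConn G σ x W then 1 else 0)
      (fun σ => edgeCorr σ s(u, v)) := by
  have hS := IsSingleEdgeCut.of_not_reachable huv hbridge hxu
  have hsplit := fun σ => ite_eq_ite_add_ite_of_iff
    (plusConn_iff_of_not_reachable (σ := σ) (W := W) huv hS.right_notMem)
  rw [show (fun σ => if PlusConn G σ x W then (1 : ℝ) else 0) = _ from funext hsplit,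
    weightedCov_add_left]
  refine add_nonneg (weightedCov_edgeCorr_nonneg W hβ hS ?_ ?_)
    (weightedCov_nonneg_of_mul_eq _ _ _ (isingPlusWeight_nonneg G β W) (fun σ => by positivity)
      (fun σ => edgeCorr_le_one σ _) fun σ => ?_)
  · exact fun σ τ hστ => ite_le_ite_of_imp (PlusConn.mono hστ)
  · intro σ τ hστ
    exact if_congr ⟨PlusConn.of_eqOn hστ, PlusConn.of_eqOn fun z hz => (hστ z hz).symm⟩ rfl rfl
  · split_ifs with h
    · obtain ⟨-, ⟨hx, _, rfl, hxu⟩, hv, -⟩ := h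
      simp [edgeCorr_mk, spin_eq_true_of_reachable hxu hx, hv, spinVal_true]
    · exact zero_mul _

theorem weightedCov_plusConn_energy_nonneg (hT : G.IsTree) (hβ : 0 ≤ β) :
    0 ≤ weightedCov (isingPlusWeight G β W) (fun σ => if PlusConn G σ x W then 1 else 0)
      (fun σ => ∑ e : G.edgeSet, edgeCorr σ e) := by
  rw [weightedCov_sum_right]
  refine sum_nonneg fun ⟨e, he⟩ _ => ?_
  induction e using Sym2.ind with
  | _ p q =>
  show 0 ≤ weightedCov _ _ fun σ => edgeCorr σ s(p, q)
  have hbridge : ¬ (G.deleteEdges {s(p, q)}).Reachable p q :=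
    SimpleGraph.isBridge_iff.1 (SimpleGraph.isAcyclic_iff_forall_isBridge.1 hT.isAcyclic he)
  obtain ⟨w⟩ := hT.connected.preconnected x p
  obtain hxp | hxq : (G.deleteEdges {s(p, q)}).Reachable x p ∨
      (G.deleteEdges {s(p, q)}).Reachable x q := by
    rcases w.reachable_deleteEdges_or p q with h | ⟨-, h, -⟩ | ⟨-, h, -⟩
    exacts [.inl h, .inl h, .inr h]
  · exact weightedCov_plusConn_edgeCorr_nonneg W x hβ he hbridge hxp
  · rw [Sym2.eq_swap] at hbridge hxq ⊢
    exact weightedCov_plusConn_edgeCorr_nonneg W x hβ (G.adj_symm he) (fun h => hbridge h.symm) hxq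

end Percolation

section Derivative

variable (G : SimpleGraph V) [Fintype G.edgeSet] (W : Set V)

lemma hasDerivAt_sum_isingPlusWeight_mul (f : (V → Bool) → ℝ) (β : ℝ) :
    HasDerivAt (fun β => ∑ σ, isingPlusWeight G β W σ * f σ)
      (∑ σ, isingPlusWeight G β W σ * (f σ * ∑ e : G.edgeSet, edgeCorr σ e)) β := by
  refine HasDerivAt.fun_sum fun σ _ => ?_
  have := ((((hasDerivAt_id β).mul_const (∑ e : G.edgeSet, edgeCorr σ e)).exp).const_mul
    (plusInd W σ)).mul_const (f σ)
  refine this.congr_deriv ?_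
  rw [isingPlusWeight_eq, id]
  ring

lemma sum_filter_isingPlusMeasure (P : (V → Bool) → Prop) [DecidablePred P] (β : ℝ) :
    ∑ σ ∈ univ.filter P, isingPlusMeasure G β W σ =
      (∑ σ, isingPlusWeight G β W σ * if P σ then 1 else 0) / ∑ σ, isingPlusWeight G β W σ := by
  simp only [isingPlusMeasure, ← sum_div, sum_filter, mul_ite, mul_one, mul_zero]

lemma hasDerivAt_isingPlusMean (f : (V → Bool) → ℝ) (β : ℝ) :
    HasDerivAt (fun β => (∑ σ, isingPlusWeight G β W σ * f σ) / ∑ σ, isingPlusWeight G β W σ)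
      (weightedCov (isingPlusWeight G β W) f (fun σ => ∑ e : G.edgeSet, edgeCorr σ e) /
        (∑ σ, isingPlusWeight G β W σ) ^ 2) β := by
  have hZ := hasDerivAt_sum_isingPlusWeight_mul G W (fun _ => 1) β
  simp only [mul_one, one_mul] at hZ
  refine ((hasDerivAt_sum_isingPlusWeight_mul G W f β).fun_div hZ
    (sum_isingPlusWeight_pos G β W).ne').congr_deriv ?_
  rw [weightedCov]
  ring

end Derivative

theorem ising_tree_plus_percolation_monotone_general (G : SimpleGraph V) [Fintype G.edgeSet]
    (hT : G.IsTree) (W : Set V) (x : V)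
    (β₁ β₂ : ℝ) (h0 : 0 ≤ β₁) (h12 : β₁ ≤ β₂) :
    ∑ σ ∈ univ.filter (fun σ : V → Bool => PlusConn G σ x W),
        isingPlusMeasure G β₁ W σ ≤
      ∑ σ ∈ univ.filter (fun σ : V → Bool => PlusConn G σ x W),
        isingPlusMeasure G β₂ W σ := by
  have hmono : MonotoneOn (fun β => (∑ σ, isingPlusWeight G β W σ *
      (if PlusConn G σ x W then 1 else 0)) / ∑ σ, isingPlusWeight G β W σ) (Set.Ici 0) :=
    monotoneOn_of_hasDerivWithinAt_nonneg (convex_Ici 0)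
      (fun β _ => (hasDerivAt_isingPlusMean G W _ β).continuousAt.continuousWithinAt)
      (fun β _ => (hasDerivAt_isingPlusMean G W _ β).hasDerivWithinAt)
      fun β hβ => div_nonneg
        (weightedCov_plusConn_energy_nonneg W x hT (interior_Ici.subset hβ).le) (sq_nonneg _)
  rw [sum_filter_isingPlusMeasure, sum_filter_isingPlusMeasure]
  exact hmono h0 (h0.trans h12) h12

/-- On a finite tree, the probability of plus-percolation from
`x` to the boundary `W` under the plus-boundary Ising measure is nondecreasing
in the inverse temperature `β`. -/
theorem ising_tree_plus_percolation_monotone (G : SimpleGraph V) [Fintype G.edgeSet]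
    (hT : G.IsTree) (W : Set V) (hW : W.Nonempty) (x : V)
    (β₁ β₂ : ℝ) (h0 : 0 ≤ β₁) (h12 : β₁ ≤ β₂) :
    ∑ σ ∈ univ.filter (fun σ : V → Bool => PlusConn G σ x W),
        isingPlusMeasure G β₁ W σ ≤
      ∑ σ ∈ univ.filter (fun σ : V → Bool => PlusConn G σ x W),
        isingPlusMeasure G β₂ W σ :=
  ising_tree_plus_percolation_monotone_general G hT W x β₁ β₂ h0 h12
end
end
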